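/- arXiv:1702.08621 — 2 statements merged into one kernel-verified Lean document; each statement's English description precedes it below -/
import Mathlib

section
/- For every integer k ≥ 2 and all m, n ≥ 0, the number G̃_{k,1}(m,n) of overpartitions counted by Ẽ_{k,1}(m,n) whose smallest part is non-overlined equals the number H̃_{k,k−1}(m, n−m) of overpartitions counted by Ẽ_{k,k−1}(m, n−m) whose smallest part is overlined. -/
open scoped BigOperators

/-- A part of an overpartition: its size, and whether it is overlined. -/
abbrev OPart := ℕ × Bool

/-- An overpartition: `f t` is the number of non-overlined parts equal to `t`, and
`fbar t` is the number of overlined parts equal to `t` (at most one, since only the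
first occurrence of a number may be overlined).  There are no parts of size `0`. -/
structure Overpartition where
  f : ℕ →₀ ℕ
  fbar : ℕ →₀ ℕ
  fbar_le_one : ∀ t, fbar t ≤ 1
  f_zero : f 0 = 0
  fbar_zero : fbar 0 = 0

namespace Overpartition

/-- the number of parts -/
def parts (l : Overpartition) : ℕ :=
  l.f.sum (fun _ m => m) + l.fbar.sum (fun _ m => m)

/-- weight: the sum of all parts -/
def wt (l : Overpartition) : ℕ :=
  l.f.sum (fun t m => t * m) + l.fbar.sum (fun t m => t * m)

/-- `V l s`: the number of overlined parts of size at most `s` -/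
def V (l : Overpartition) (s : ℕ) : ℕ := ∑ t ∈ Finset.Icc 1 s, l.fbar t

end Overpartition

/-- The difference/congruence conditions defining `Õ_{k,i}`. -/
def OCond (k i : ℕ) (l : Overpartition) : Prop :=
  (l.fbar 1 + l.f 2 ≤ i - 1) ∧
  (∀ t, 1 ≤ t → l.f (2*t) + l.fbar (2*t) + l.fbar (2*t+1) + l.f (2*t+2) ≤ k - 1) ∧
  (∀ t, 1 ≤ l.f (2*t+1) → l.f (2*t+2) ≤ k - 2) ∧
  (∀ t, 1 ≤ t → l.f (2*t) + l.fbar (2*t) + l.fbar (2*t+1) + l.f (2*t+2) = k - 1 →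
    t * l.f (2*t) + t * l.fbar (2*t) + t * l.fbar (2*t+1) + (t+1) * l.f (2*t+2)
      ≡ l.V (2*t+1) + i - 1 [MOD 2]) ∧
  (∀ t, 1 ≤ l.f (2*t+1) → l.f (2*t+2) = k - 2 →
    t + (t+1) * l.f (2*t+2) ≡ l.V (2*t+1) + i - 1 [MOD 2])

/-- Non-overlined parts are not congruent to `0, ±(2i-1)` modulo `4k-4`. -/
def PCond (k i : ℕ) (l : Overpartition) : Prop :=
  ∀ t, 0 < l.f t →
    ¬ t ≡ 0 [MOD 4*k-4] ∧ ¬ t ≡ 2*i-1 [MOD 4*k-4] ∧ ¬ t ≡ 4*k-3-2*i [MOD 4*k-4]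

/-- The difference/congruence conditions defining `Ẽ_{k,i}`. -/
def ECond (k i : ℕ) (l : Overpartition) : Prop :=
  l.f 1 ≤ i - 1 ∧
  (∀ t, 1 ≤ t → l.f t + l.fbar t + l.f (t+1) ≤ k - 1) ∧
  (∀ t, 1 ≤ t → l.f t + l.fbar t + l.f (t+1) = k - 1 →
    t * l.f t + t * l.fbar t + (t+1) * l.f (t+1) ≡ l.V t + i - 1 [MOD 2])

/-- the smallest part (in the order `1̄ < 1 < 2̄ < 2 < ⋯`) exists and is non-overlined -/
def SmallestNonOverlined (l : Overpartition) : Prop :=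
  ∃ s, 0 < l.f s ∧ l.fbar s = 0 ∧ ∀ t < s, l.f t = 0 ∧ l.fbar t = 0

/-- the smallest part (in the order `1̄ < 1 < 2̄ < 2 < ⋯`) exists and is overlined -/
def SmallestOverlined (l : Overpartition) : Prop :=
  ∃ s, 0 < l.fbar s ∧ ∀ t < s, l.f t = 0 ∧ l.fbar t = 0

def NoOverlined (l : Overpartition) : Prop := ∀ t, l.fbar t = 0

def NoOdd (l : Overpartition) : Prop := ∀ t, t % 2 = 1 → l.f t = 0 ∧ l.fbar t = 0

/-- the list of the parts of sizes `1,…,B` in increasing order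
(`1̄ < 1 < 2̄ < 2 < ⋯`); an overlined part is `(t, true)`. -/
def partsListUpTo (l : Overpartition) (B : ℕ) : List OPart :=
  (List.range B).flatMap (fun t =>
    (if l.fbar (t+1) = 1 then [((t+1 : ℕ), true)] else []) ++
    List.replicate (l.f (t+1)) ((t+1 : ℕ), false))

def obound (l : Overpartition) : ℕ := (l.f.support ∪ l.fbar.support).sup id + 1

/-- the list of all parts of `l` in increasing order -/
def partsList (l : Overpartition) : List OPart := partsListUpTo l (obound l)

/-- the multiset of parts of `l` -/
def partsMS (l : Overpartition) : Multiset OPart := (partsList l : Multiset OPart)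

/-- the least positive integer not belonging to `S` -/
def mex1 (S : Finset ℕ) : ℕ :=
  ((List.range (S.sup id + 2)).filter (fun r => decide (1 ≤ r ∧ r ∉ S))).headI

/-- the set of marks used by the already-marked parts satisfying `test` -/
def marksWhere (acc : List (OPart × ℕ)) (test : OPart → Bool) : Finset ℕ :=
  ((acc.filter (fun q => test q.1)).map (fun q => q.2)).toFinset

/-- process the parts in increasing order, assigning to each one the mark
computed by `markOf` from the previously marked parts -/
def markFold (markOf : List (OPart × ℕ) → OPart → ℕ) :
    List OPart → List (OPart × ℕ) → List (OPart × ℕ)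
  | [], acc => acc
  | p :: rest, acc => markFold markOf rest (acc ++ [(p, markOf acc p)])

/-- The Gordon marking rule: each part gets the smallest possible mark subject to:
(i) if `\overline{t+1}` is not a part, then all parts `t`, `t̄`, `t+1` get distinct
marks; (ii) if `\overline{t+1}` is a part, then the smallest mark assigned to a part
`t` or `t̄` may be reused for `t+1` or `\overline{t+1}`. -/
def gordonMarkOf (l : Overpartition) (acc : List (OPart × ℕ)) (p : OPart) : ℕ :=
  let same := marksWhere acc (fun q => decide (q.1 = p.1))
  let prev := marksWhere acc (fun q => decide (q.1 + 1 = p.1))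
  if l.fbar p.1 = 1 then
    mex1 (same ∪ (if h : prev.Nonempty then prev.erase (prev.min' h) else prev))
  else mex1 (same ∪ prev)

/-- the Gordon marking of `l`: the list of parts in increasing order with their marks -/
def gordonMarked (l : Overpartition) : List (OPart × ℕ) :=
  markFold (gordonMarkOf l) (partsList l) []

/-- `N_r`: the number of `r`-marked parts in the Gordon marking -/
def gordonN (l : Overpartition) (r : ℕ) : ℕ :=
  ((gordonMarked l).filter (fun q => decide (q.2 = r))).length

/-- The Göllnitz–Gordon marking rule (Definition 5.1): non-overlined odd and
overlined even parts get mark 1; an overlined odd part `\overline{2j+1}` gets the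
smallest mark different from those of `2j`, `\overline{2j}`; a non-overlined even part
`2j+2` gets the smallest mark different from earlier equal parts and, in case (b),
from the marks of `2j`, `\overline{2j}`, `\overline{2j+1}`; in case (c) it may not get
mark 1 and may reuse the smallest mark assigned to `2j` or `\overline{2j+1}`. -/
def ggMarkOf (l : Overpartition) (acc : List (OPart × ℕ)) (p : OPart) : ℕ :=
  if p.1 % 2 = 1 ∧ p.2 = false then 1
  else if p.1 % 2 = 0 ∧ p.2 = true then 1
  else if p.1 % 2 = 1 then
    mex1 (marksWhere acc (fun q => decide (q.1 = p.1 - 1)))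
  else
    let same := marksWhere acc (fun q => decide (q.1 = p.1))
    let lower := marksWhere acc
      (fun q => decide (q.1 = p.1 - 2 ∨ (q.1 = p.1 - 1 ∧ q.2 = true)))
    if 1 ∈ lower ∨ (l.f (p.1 - 1) = 0 ∧ l.fbar p.1 = 0) then
      mex1 (same ∪ lower)
    else
      mex1 (insert 1 same ∪ (if h : lower.Nonempty then lower.erase (lower.min' h) else lower))

/-- the Göllnitz–Gordon marking of `l` -/
def ggMarked (l : Overpartition) : List (OPart × ℕ) :=
  markFold (ggMarkOf l) (partsList l) []

/-- `N_r`: the number of `r`-marked parts in the Göllnitz–Gordon marking -/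
def ggN (l : Overpartition) (r : ℕ) : ℕ :=
  ((ggMarked l).filter (fun q => decide (q.2 = r))).length
/-- the 1-marked parts `λ^{(1)}_1 ≥ λ^{(1)}_2 ≥ ⋯` of the Göllnitz–Gordon marking,
in decreasing order (so index `j-1` holds `λ^{(1)}_j`) -/
def oneMarkedDesc (l : Overpartition) : List OPart :=
  (((ggMarked l).filter (fun q => decide (q.2 = 1))).map (fun q => q.1)).reverse

/-- the multiset of marked parts of a cluster: its `b`-th entry (0-indexed) is `(b+1)`-marked -/
def clusterMS (c : List OPart) : Multiset (OPart × ℕ) :=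
  ((c.zipIdx.map (fun q => (q.1, q.2 + 1))) : List (OPart × ℕ))

/-- there is a part of size `s` with mark `m` in the marked list `L` -/
def ExistsMarkedAt (L : List (OPart × ℕ)) (s m : ℕ) : Prop :=
  ∃ q ∈ L, q.1.1 = s ∧ q.2 = m

/-- conditions (i)–(iii) for the entry `y` (of mark `b+2`) following the entry `x`
(of mark `b+1`, i.e. 0-indexed position `b`) in a cluster -/
def chainStep (L : List (OPart × ℕ)) (b : ℕ) (x y : OPart) : Prop :=
  (x.1 % 2 = 1 → y.1 = x.1 + 1) ∧
  (x.1 % 2 = 0 →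
    (¬ ExistsMarkedAt L (x.1 + 2) (b + 1) → x.1 ≤ y.1 ∧ y.1 ≤ x.1 + 2) ∧
    (ExistsMarkedAt L (x.1 + 2) (b + 1) → x.1 ≤ y.1 ∧ y.1 ≤ x.1 + 1))

/-- cases (a), (b): the `j`-cluster is forced to be the singleton `λ^{(1)}_j` -/
def ForcedSingleton (one : List OPart) (j : ℕ) : Prop :=
  2 ≤ j ∧ ∃ cur prev, one[j-1]? = some cur ∧ one[j-2]? = some prev ∧
    (cur.1 = prev.1 ∨ (cur.1 % 2 = 1 ∧ prev.1 = cur.1 + 1))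

/-- `α` is the decomposition of the Göllnitz–Gordon marking of `l` into clusters
`α^{(N₁)}, …, α^{(1)}`: the `j`-cluster starts with the `j`-th largest 1-marked part,
the clusters partition the marked parts, forced singletons are singletons, consecutive
entries of a cluster obey conditions (i)–(iii), and each non-singleton-forced cluster
is a maximal such chain. -/
def IsClusterDecomp (l : Overpartition) (α : ℕ → List OPart) : Prop :=
  (∀ j, j = 0 ∨ ggN l 1 < j → α j = []) ∧
  (∀ j, 1 ≤ j → j ≤ ggN l 1 → (α j).head? = (oneMarkedDesc l)[j-1]?) ∧
  ((ggMarked l : Multiset (OPart × ℕ)) = ∑ j ∈ Finset.Icc 1 (ggN l 1), clusterMS (α j)) ∧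
  (∀ j, ForcedSingleton (oneMarkedDesc l) j → (α j).length = 1) ∧
  (∀ j b x y, (α j)[b]? = some x → (α j)[b+1]? = some y → chainStep (ggMarked l) b x y) ∧
  (∀ j, 1 ≤ j → j ≤ ggN l 1 → ¬ ForcedSingleton (oneMarkedDesc l) j →
    ∀ last, (α j).getLast? = some last →
      ¬ ∃ p : OPart,
        ((p, (α j).length + 1) ∈
          ((ggMarked l : Multiset (OPart × ℕ)) - ∑ j' ∈ Finset.Icc j (ggN l 1), clusterMS (α j'))) ∧
        chainStep (ggMarked l) ((α j).length - 1) last p)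

/-- the set `β(j)` (of 0-indexed positions): positions `c` such that
`|β_c^{(j)}| − |β_c^{(j+1)}| ≤ 2`, with strict inequality if either part is odd -/
def BetaIdx (α : ℕ → List OPart) (j : ℕ) : Set ℕ :=
  {c | ∃ x y, (α j)[c]? = some x ∧ (α (j+1))[c]? = some y ∧
     (x.1 : ℤ) - (y.1 : ℤ) ≤ 2 ∧ ((x.1 % 2 = 1 ∨ y.1 % 2 = 1) → (x.1 : ℤ) - (y.1 : ℤ) < 2)}

/-- `ν'` is obtained from `ν` by the second dilation of `p`-th kind: the odd part
`old` of the cluster `β^{(p)}` is replaced by the even part of size `|old|+1` with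
opposite overline status; when `p > 1` (in which case `β^{(p-1)}` must have no odd
part), additionally one part `chosen` of `β^{(p-1)}` — the entry indexed by the set
`β(p-1)` if it is nonempty, and otherwise the part of `β^{(p-1)}` of smallest size
and largest mark — is replaced by the part of size `|chosen|+1` with opposite
overline status. -/
def SecondDilationRel (ν ν' : Overpartition) (p : ℕ) : Prop :=
  ∃ α : ℕ → List OPart, IsClusterDecomp ν α ∧ 1 ≤ p ∧ p ≤ ggN ν 1 ∧
    ∃ old ∈ α p, old.1 % 2 = 1 ∧
      ((p = 1 ∧ partsMS ν' = (partsMS ν).erase old + {(old.1 + 1, !old.2)}) ∨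
       (1 < p ∧ (∀ q ∈ α (p-1), q.1 % 2 = 0) ∧
        ∃ c chosen, (α (p-1))[c]? = some chosen ∧
          ((BetaIdx α (p-1) = ∅ ∧ (∀ q ∈ α (p-1), chosen.1 ≤ q.1) ∧
             (∀ c' q, c < c' → (α (p-1))[c']? = some q → chosen.1 < q.1)) ∨
           c ∈ BetaIdx α (p-1)) ∧
          partsMS ν' = ((partsMS ν).erase old).erase chosen
            + {(old.1 + 1, !old.2), (chosen.1 + 1, !chosen.2)}))

/-- the second reduction of `p`-th kind: the inverse of the second dilation of `p`-th kind -/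
def SecondReductionRel (ν ν' : Overpartition) (p : ℕ) : Prop := SecondDilationRel ν' ν p

/-- the set of overpartitions satisfying the conditions of `Ẽ_{k,i}` whose Gordon
marking has exactly `N r` `r`-marked parts for `1 ≤ r ≤ k-1` -/
def ESetN (k i : ℕ) (N : ℕ → ℕ) : Set Overpartition :=
  {l | ECond k i l ∧ (∀ r, 1 ≤ r → r ≤ k-1 → gordonN l r = N r) ∧
    l.parts = ∑ j ∈ Finset.Icc 1 (k-1), N j}

def GSetN (k i : ℕ) (N : ℕ → ℕ) : Set Overpartition :=
  {l ∈ ESetN k i N | SmallestNonOverlined l}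

def HSetN (k i : ℕ) (N : ℕ → ℕ) : Set Overpartition :=
  {l ∈ ESetN k i N | SmallestOverlined l}

def BSetN (k i : ℕ) (N : ℕ → ℕ) : Set Overpartition :=
  {l ∈ GSetN k i N | NoOverlined l}

/-- the set of overpartitions satisfying the conditions of `Õ_{k,i}` whose
Göllnitz–Gordon marking has exactly `N r` `r`-marked parts for `1 ≤ r ≤ k-1` -/
def OSetN (k i : ℕ) (N : ℕ → ℕ) : Set Overpartition :=
  {l | OCond k i l ∧ (∀ r, 1 ≤ r → r ≤ k-1 → ggN l r = N r) ∧
    l.parts = ∑ j ∈ Finset.Icc 1 (k-1), N j}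

def WSetN (k i : ℕ) (N : ℕ → ℕ) : Set Overpartition :=
  {l ∈ OSetN k i N | NoOdd l}

/-- `(a;q)_n = ∏_{j=0}^{n-1} (1 - a q^j)` -/
noncomputable def qPoch (a q : ℂ) (n : ℕ) : ℂ := ∏ j ∈ Finset.range n, (1 - a * q ^ j)

/-- `(a;q)_∞ = ∏_{j=0}^{∞} (1 - a q^j)` -/
noncomputable def qPochInf (a q : ℂ) : ℂ := ∏' j : ℕ, (1 - a * q ^ j)

/-- `(a;q)_{n-1} = (a;q)_n / (1 - a q^{n-1})`, the standard meaning of a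
`q`-Pochhammer symbol with subscript `n - 1` (also for `n = 0`). -/
noncomputable def qPochSub1 (a q : ℂ) (n : ℕ) : ℂ := qPoch a q n / (1 - a * q ^ ((n : ℤ) - 1))

/-- sequences `N` with `N 1 ≥ N 2 ≥ ⋯ ≥ N (k-1) ≥ 0` (and `N j = 0` otherwise),
encoding the summation indices `N₁ ≥ ⋯ ≥ N_{k-1} ≥ 0` -/
def DecSeq (k : ℕ) : Set (ℕ → ℕ) :=
  {N | N 0 = 0 ∧ (∀ j, 1 ≤ j → N (j+1) ≤ N j) ∧ (∀ j, k ≤ j → N j = 0)}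

def doubleEmb : ℕ ↪ ℕ := ⟨fun t => 2 * t, mul_right_injective₀ two_ne_zero⟩

/-- doubling every part of an overpartition -/
noncomputable def double (l : Overpartition) : Overpartition where
  f := Finsupp.embDomain doubleEmb l.f
  fbar := Finsupp.embDomain doubleEmb l.fbar
  fbar_le_one := by
    intro t
    by_cases h : ∃ s, 2 * s = t
    · obtain ⟨s, rfl⟩ := h
      exact (Finsupp.embDomain_apply_self doubleEmb l.fbar s).trans_le (l.fbar_le_one s)
    · rw [Finsupp.embDomain_notin_range]
      · exact Nat.zero_le _
      · rintro ⟨s, rfl⟩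
        exact h ⟨s, rfl⟩
  f_zero := (Finsupp.embDomain_apply_self doubleEmb l.f 0).trans l.f_zero
  fbar_zero := (Finsupp.embDomain_apply_self doubleEmb l.fbar 0).trans l.fbar_zero

/-!
Let `μ` have smallest part `s̄`. Adding one to every part of `μ` and removing the overline
of the smallest part gives an overpartition with the same number of parts, weight raised by
that number, smallest part `s + 1` non-overlined and no part `1`; this is a bijection onto
such overpartitions. For `t ≥ s` the window `f_t + f_{t̄} + f_{t+1}` of `μ` becomes the window
at `t + 1` of the image, with the same size, with its weighted sum raised by that size, and
with `V` lowered by one. When the size is `k - 1`, the parity condition with `i = k - 1`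
thus turns into the one with `i = 1`. The new window at `s`, which contains the
un-overlined part, is controlled by the window of `μ` at `s`.
-/

lemma Finsupp.embDomain_addRightEmbedding_succ {M : Type*} [Zero M] (v : ℕ →₀ M) (a : ℕ) :
    Finsupp.embDomain (addRightEmbedding 1) v (a + 1) = v a :=
  Finsupp.embDomain_apply_self _ v a

lemma Finsupp.embDomain_addRightEmbedding_zero {M : Type*} [Zero M] (v : ℕ →₀ M) :
    Finsupp.embDomain (addRightEmbedding 1) v 0 = 0 :=
  Finsupp.embDomain_of_notMem_range _ _ _ (by simp)

namespace Overpartition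

@[ext]
lemma ext {l₁ l₂ : Overpartition} (hf : l₁.f = l₂.f) (hfbar : l₁.fbar = l₂.fbar) :
    l₁ = l₂ := by
  cases l₁; cases l₂; congr

lemma parts_le_wt (l : Overpartition) : l.parts ≤ l.wt := by
  have key : ∀ v : ℕ →₀ ℕ, v 0 = 0 → (v.sum fun _ m => m) ≤ v.sum fun t m => t * m :=
    fun v hv => Finset.sum_le_sum fun t ht =>
      Nat.le_mul_of_pos_left _ (Nat.pos_of_ne_zero fun h => Finsupp.mem_support_iff.1 ht (h ▸ hv))
  exact Nat.add_le_add (key l.f l.f_zero) (key l.fbar l.fbar_zero)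

lemma V_succ (l : Overpartition) (t : ℕ) : l.V (t + 1) = l.V t + l.fbar (t + 1) :=
  Finset.sum_Icc_succ_top (Nat.le_add_left 1 t) _

/-- Junk value `0` for the empty overpartition. -/
noncomputable def lowest (l : Overpartition) : ℕ := sInf {t | l.f t ≠ 0 ∨ l.fbar t ≠ 0}

lemma eq_zero_of_lt_lowest {l : Overpartition} {t : ℕ} (ht : t < l.lowest) :
    l.f t = 0 ∧ l.fbar t = 0 := by
  simpa [not_or] using Nat.notMem_of_lt_sInf ht

lemma lowest_eq {l : Overpartition} {s : ℕ} (hs : l.f s ≠ 0 ∨ l.fbar s ≠ 0)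
    (hlow : ∀ t < s, l.f t = 0 ∧ l.fbar t = 0) : l.lowest = s := by
  refine le_antisymm (Nat.sInf_le hs) (not_lt.1 fun hlt => ?_)
  have hmem : l.lowest ∈ {t | l.f t ≠ 0 ∨ l.fbar t ≠ 0} := Nat.sInf_mem ⟨s, hs⟩
  have := hlow _ hlt
  exact hmem.elim (· this.1) (· this.2)

lemma V_eq_zero_of_lt_lowest {l : Overpartition} {t : ℕ} (ht : t < l.lowest) : l.V t = 0 :=
  Finset.sum_eq_zero fun _ hu => (eq_zero_of_lt_lowest ((Finset.mem_Icc.1 hu).2.trans_lt ht)).2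

lemma V_lowest (l : Overpartition) : l.V l.lowest = l.fbar l.lowest := by
  rcases h : l.lowest with _ | b
  · simp [V, l.fbar_zero]
  · rw [V_succ, V_eq_zero_of_lt_lowest (by omega), zero_add]

lemma smallestOverlined_iff {l : Overpartition} : SmallestOverlined l ↔ l.fbar l.lowest = 1 := by
  constructor
  · rintro ⟨s, hs, hlow⟩
    rw [lowest_eq (Or.inr hs.ne') hlow]
    exact le_antisymm (l.fbar_le_one s) hs
  · intro h
    exact ⟨l.lowest, by omega, fun t ht => eq_zero_of_lt_lowest ht⟩

lemma smallestNonOverlined_iff {l : Overpartition} :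
    SmallestNonOverlined l ↔ 0 < l.f l.lowest ∧ l.fbar l.lowest = 0 := by
  constructor
  · rintro ⟨s, hs, hbar, hlow⟩
    rw [lowest_eq (Or.inl hs.ne') hlow]
    exact ⟨hs, hbar⟩
  · rintro ⟨hs, hbar⟩
    exact ⟨l.lowest, hs, hbar, fun t ht => eq_zero_of_lt_lowest ht⟩

lemma two_le_lowest {l : Overpartition} (hl : SmallestNonOverlined l) (h1 : l.f 1 = 0) :
    2 ≤ l.lowest := by
  obtain ⟨hs, -⟩ := smallestNonOverlined_iff.1 hl
  by_contra! h
  interval_cases h : l.lowest <;> simp_all [l.f_zero]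

def window (l : Overpartition) (t : ℕ) : ℕ := l.f t + l.fbar t + l.f (t + 1)

def windowWt (l : Overpartition) (t : ℕ) : ℕ := t * l.f t + t * l.fbar t + (t + 1) * l.f (t + 1)

/-- Conditions (2) and (3) of `Ẽ_{k,i}` at `t`. -/
def WindowOK (k i : ℕ) (l : Overpartition) (t : ℕ) : Prop :=
  l.window t ≤ k - 1 ∧ (l.window t = k - 1 → l.windowWt t ≡ l.V t + i - 1 [MOD 2])

lemma eCond_iff {k i : ℕ} {l : Overpartition} :
    ECond k i l ↔ l.f 1 ≤ i - 1 ∧ ∀ t, 1 ≤ t → l.WindowOK k i t := by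
  simp only [ECond, WindowOK, window, windowWt, imp_and, forall_and]

lemma window_eq_zero_of_lt {l : Overpartition} {t : ℕ} (ht : t + 1 < l.lowest) :
    l.window t = 0 := by
  simp [window, eq_zero_of_lt_lowest ht, eq_zero_of_lt_lowest (t.lt_succ_self.trans ht)]

lemma window_le_of_lt_lowest {l : Overpartition} {t : ℕ} (ht : t < l.lowest) :
    l.window t ≤ l.f l.lowest := by
  rcases (Nat.succ_le_of_lt ht).lt_or_eq with h | h
  · simp [window_eq_zero_of_lt h]
  · simp [window, eq_zero_of_lt_lowest ht, ← h]

lemma windowOK_of_lt {k i : ℕ} {l : Overpartition} {t : ℕ} (h : l.window t < k - 1) :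
    l.WindowOK k i t :=
  ⟨h.le, fun h' => absurd h' h.ne⟩

lemma windowOK_transfer {k : ℕ} (hk : 2 ≤ k) {μ ν : Overpartition} {t t' : ℕ}
    (hW : ν.window t' = μ.window t) (hS : ν.windowWt t' = μ.windowWt t + μ.window t)
    (hV : ν.V t' + 1 = μ.V t) : ν.WindowOK k 1 t' ↔ μ.WindowOK k (k - 1) t := by
  unfold WindowOK Nat.ModEq
  rw [hW, hS, ← hV]
  omega

/-- Add one to every part; the smallest part `s̄` becomes a non-overlined `s + 1`. -/
noncomputable def raise (μ : Overpartition) : Overpartition where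
  f := Finsupp.embDomain (addRightEmbedding 1) μ.f + Finsupp.single (μ.lowest + 1) 1
  fbar := Finsupp.embDomain (addRightEmbedding 1) (μ.fbar.erase μ.lowest)
  fbar_le_one t := by
    rcases t with _ | a
    · simp [Finsupp.embDomain_addRightEmbedding_zero]
    · rw [Finsupp.embDomain_addRightEmbedding_succ, Finsupp.erase_apply]
      split_ifs
      exacts [zero_le_one, μ.fbar_le_one a]
  f_zero := by simp [Finsupp.embDomain_addRightEmbedding_zero]
  fbar_zero := Finsupp.embDomain_addRightEmbedding_zero _

section raise

variable {μ : Overpartition}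

lemma raise_f_succ (a : ℕ) : μ.raise.f (a + 1) = μ.f a + if a = μ.lowest then 1 else 0 := by
  simp [raise, Finsupp.embDomain_addRightEmbedding_succ, Finsupp.single_apply, eq_comm]

lemma raise_fbar_succ (a : ℕ) :
    μ.raise.fbar (a + 1) = if a = μ.lowest then 0 else μ.fbar a := by
  simp [raise, Finsupp.embDomain_addRightEmbedding_succ, Finsupp.erase_apply]

lemma lowest_raise : μ.raise.lowest = μ.lowest + 1 := by
  refine lowest_eq (Or.inl (by simp [raise_f_succ])) fun t ht => ?_
  rcases t with _ | a
  · exact ⟨μ.raise.f_zero, μ.raise.fbar_zero⟩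
  · have := eq_zero_of_lt_lowest (show a < μ.lowest by omega)
    simp [raise_f_succ, raise_fbar_succ, this, show a ≠ μ.lowest by omega]

lemma smallestNonOverlined_raise (μ : Overpartition) : SmallestNonOverlined μ.raise := by
  simp [smallestNonOverlined_iff, lowest_raise, raise_f_succ, raise_fbar_succ]

variable (hμ : μ.fbar μ.lowest = 1)
include hμ

lemma raise_f_add_fbar_succ (a : ℕ) :
    μ.raise.f (a + 1) + μ.raise.fbar (a + 1) = μ.f a + μ.fbar a := by
  rw [raise_f_succ, raise_fbar_succ]
  split_ifs with h
  · rw [h, hμ]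
  · rfl

lemma parts_raise : μ.raise.parts = μ.parts := by
  simp only [parts, raise]
  rw [Finsupp.sum_add_index' (fun _ => rfl) (fun _ _ _ => rfl), Finsupp.sum_embDomain,
    Finsupp.sum_embDomain, Finsupp.sum_single_index rfl,
    ← Finsupp.add_sum_erase' μ.fbar μ.lowest _ (fun _ => rfl), hμ]
  ring

lemma wt_raise : μ.raise.wt = μ.wt + μ.parts := by
  have sum_succ_mul (v : ℕ →₀ ℕ) : (v.sum fun a b => (a + 1) * b) =
      (v.sum fun a b => a * b) + v.sum fun _ b => b := by
    simp only [add_mul, one_mul, Finsupp.sum_add]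
  simp only [wt, parts, raise]
  rw [Finsupp.sum_add_index' (fun _ => mul_zero _) (fun _ _ _ => mul_add _ _ _),
    Finsupp.sum_embDomain, Finsupp.sum_embDomain, Finsupp.sum_single_index (mul_zero _),
    ← Finsupp.add_sum_erase' μ.fbar μ.lowest _ (fun _ => mul_zero _),
    ← Finsupp.add_sum_erase' μ.fbar μ.lowest _ (fun _ => rfl), hμ]
  simp only [addRightEmbedding_apply, sum_succ_mul]
  ring

lemma V_raise {a : ℕ} (ha : μ.lowest ≤ a) : μ.raise.V (a + 1) + 1 = μ.V a := by
  induction a, ha using Nat.le_induction with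
  | base =>
    rw [V_succ, V_eq_zero_of_lt_lowest (by rw [lowest_raise]; omega), raise_fbar_succ,
      if_pos rfl, V_lowest, hμ]
  | succ a ha ih =>
    rw [V_succ, V_succ μ, raise_fbar_succ, if_neg (by omega), ← ih]
    ring

lemma window_raise_succ {a : ℕ} (ha : μ.lowest ≤ a) :
    μ.raise.window (a + 1) = μ.window a := by
  rw [window, window, raise_f_add_fbar_succ hμ, raise_f_succ, if_neg (by omega), add_zero]

lemma windowWt_raise_succ {a : ℕ} (ha : μ.lowest ≤ a) :
    μ.raise.windowWt (a + 1) = μ.windowWt a + μ.window a := by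
  have hc := raise_f_add_fbar_succ hμ a
  rw [windowWt, windowWt, window, raise_f_succ (a + 1), if_neg (by omega), add_zero]
  linear_combination (a + 1) * hc

lemma windowOK_raise_succ_iff {k a : ℕ} (hk : 2 ≤ k) (ha : μ.lowest ≤ a) :
    μ.raise.WindowOK k 1 (a + 1) ↔ μ.WindowOK k (k - 1) a :=
  windowOK_transfer hk (window_raise_succ hμ ha) (windowWt_raise_succ hμ ha) (V_raise hμ ha)

lemma windowOK_raise_lowest {k : ℕ} (hk : 2 ≤ k) (h : μ.WindowOK k (k - 1) μ.lowest) :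
    μ.raise.WindowOK k 1 μ.lowest := by
  have hlt : μ.lowest < μ.raise.lowest := by rw [lowest_raise]; omega
  have hν := eq_zero_of_lt_lowest hlt
  have hf : μ.raise.f (μ.lowest + 1) = μ.f μ.lowest + 1 := by rw [raise_f_succ, if_pos rfl]
  rcases Nat.eq_zero_or_pos (μ.f (μ.lowest + 1)) with h0 | hpos
  · refine (windowOK_transfer hk ?_ ?_ ?_).2 h
    · simp only [window, hν, hf, hμ, h0]
      ring
    · simp only [windowWt, window, hν, hf, hμ, h0]
      ring
    · rw [V_eq_zero_of_lt_lowest hlt, V_lowest, hμ]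
  · apply windowOK_of_lt
    have := h.1
    simp only [window, hν, hf, hμ] at this ⊢
    omega

lemma eCond_raise_iff {k : ℕ} (hk : 2 ≤ k) : ECond k 1 μ.raise ↔ ECond k (k - 1) μ := by
  have hs : 1 ≤ μ.lowest := Nat.one_le_iff_ne_zero.2 fun h => by simp [h, μ.fbar_zero] at hμ
  rw [eCond_iff, eCond_iff]
  constructor
  · rintro ⟨-, hν⟩
    have hμs := (windowOK_raise_succ_iff hμ hk le_rfl).1 (hν _ (by omega))
    have hfs : μ.f μ.lowest + 1 ≤ k - 1 := by
      have := hμs.1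
      simp only [window, hμ] at this
      omega
    refine ⟨?_, fun t ht => ?_⟩
    · rcases hs.lt_or_eq with h | h
      · rw [(eq_zero_of_lt_lowest h).1]
        exact Nat.zero_le _
      · rw [h]
        omega
    · rcases lt_or_ge t μ.lowest with hlt | hle
      · exact windowOK_of_lt ((window_le_of_lt_lowest hlt).trans_lt (by omega))
      · exact (windowOK_raise_succ_iff hμ hk hle).1 (hν _ (by omega))
  · rintro ⟨-, hμ'⟩
    refine ⟨by simp [raise_f_succ, μ.f_zero, (show 0 ≠ μ.lowest by omega)], fun t ht => ?_⟩
    obtain hlt | rfl | hgt := lt_trichotomy t μ.lowest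
    · refine windowOK_of_lt ?_
      rw [window_eq_zero_of_lt (by rw [lowest_raise]; omega)]
      omega
    · exact windowOK_raise_lowest hμ hk (hμ' _ hs)
    · obtain ⟨a, rfl⟩ : ∃ a, t = a + 1 := ⟨t - 1, by omega⟩
      exact (windowOK_raise_succ_iff hμ hk (by omega)).2 (hμ' a (by omega))

end raise

/-- Subtract one from every part; one copy of the smallest part `s` becomes `\overline{s-1}`.
This inverts `raise` when `s ≥ 2` is non-overlined. -/
noncomputable def lower (ν : Overpartition) : Overpartition where
  f := ((Finsupp.comapDomain (· + 1) ν.f (add_left_injective 1).injOn).update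
    (ν.lowest - 1) (ν.f ν.lowest - 1)).erase 0
  fbar := ((Finsupp.comapDomain (· + 1) ν.fbar (add_left_injective 1).injOn).update
    (ν.lowest - 1) 1).erase 0
  fbar_le_one t := by
    rw [Finsupp.erase_apply, Finsupp.update_apply, Finsupp.comapDomain_apply]
    split_ifs
    exacts [zero_le_one, le_rfl, ν.fbar_le_one _]
  f_zero := Finsupp.erase_same
  fbar_zero := Finsupp.erase_same

section lower

variable {ν : Overpartition}

lemma lower_f {b : ℕ} (hb : b ≠ 0) :
    ν.lower.f b = if b = ν.lowest - 1 then ν.f ν.lowest - 1 else ν.f (b + 1) := by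
  simp [lower, Finsupp.erase_ne hb, Finsupp.update_apply]

lemma lower_fbar {b : ℕ} (hb : b ≠ 0) :
    ν.lower.fbar b = if b = ν.lowest - 1 then 1 else ν.fbar (b + 1) := by
  simp [lower, Finsupp.erase_ne hb, Finsupp.update_apply]

lemma lower_raise {μ : Overpartition} (hμ : μ.fbar μ.lowest = 1) : μ.raise.lower = μ := by
  ext b
  · rcases eq_or_ne b 0 with rfl | hb
    · rw [μ.raise.lower.f_zero, μ.f_zero]
    · rw [lower_f hb, lowest_raise, Nat.add_sub_cancel]
      by_cases h : b = μ.lowest <;> simp [raise_f_succ, h]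
  · rcases eq_or_ne b 0 with rfl | hb
    · rw [μ.raise.lower.fbar_zero, μ.fbar_zero]
    · rw [lower_fbar hb, lowest_raise, raise_fbar_succ, Nat.add_sub_cancel]
      split_ifs with h
      exacts [h ▸ hμ.symm, rfl]

variable (hs : 2 ≤ ν.lowest)
include hs

lemma lowest_lower : ν.lower.lowest = ν.lowest - 1 := by
  have hbar : ν.lower.fbar (ν.lowest - 1) ≠ 0 := by
    simp [lower_fbar (show ν.lowest - 1 ≠ 0 by omega)]
  refine lowest_eq (Or.inr hbar) fun t ht => ?_
  rcases eq_or_ne t 0 with rfl | ht0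
  · exact ⟨ν.lower.f_zero, ν.lower.fbar_zero⟩
  · rw [lower_f ht0, lower_fbar ht0, if_neg ht.ne, if_neg ht.ne]
    exact eq_zero_of_lt_lowest (by omega)

lemma fbar_lower_lowest : ν.lower.fbar ν.lower.lowest = 1 := by
  rw [lowest_lower hs, lower_fbar (by omega), if_pos rfl]

lemma raise_lower (hν : SmallestNonOverlined ν) : ν.lower.raise = ν := by
  obtain ⟨hf, hbar⟩ := smallestNonOverlined_iff.1 hν
  have h1 := eq_zero_of_lt_lowest (show 1 < ν.lowest by omega)
  ext a
  · rcases a with _ | a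
    · rw [ν.lower.raise.f_zero, ν.f_zero]
    · rw [raise_f_succ, lowest_lower hs]
      rcases eq_or_ne a 0 with rfl | ha
      · simp [ν.lower.f_zero, h1.1, show 0 ≠ ν.lowest - 1 by omega]
      · rw [lower_f ha]
        split_ifs with h
        · rw [h, Nat.sub_add_cancel (show 1 ≤ ν.lowest by omega)]
          omega
        · rfl
  · rcases a with _ | a
    · rw [ν.lower.raise.fbar_zero, ν.fbar_zero]
    · rw [raise_fbar_succ, lowest_lower hs]
      rcases eq_or_ne a 0 with rfl | ha
      · simp [ν.lower.fbar_zero, h1.2]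
      · rw [lower_fbar ha]
        split_ifs with h
        · rw [h, Nat.sub_add_cancel (show 1 ≤ ν.lowest by omega), hbar]
        · rfl

end lower

end Overpartition

/-- `G̃_{k,1}(m,n) = H̃_{k,k-1}(m,n-m)` for `k ≥ 2` (Theorem 3.1, (3.3)). -/
theorem G_one_eq_H_topshift
    (k : ℕ) (hk : 2 ≤ k) (m n : ℕ) :
    {l : Overpartition | l.wt = n ∧ l.parts = m ∧ ECond k 1 l ∧ SmallestNonOverlined l}.ncard
      = {l : Overpartition |
          l.wt = n - m ∧ l.parts = m ∧ ECond k (k-1) l ∧ SmallestOverlined l}.ncard := by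
  have two_le : ∀ l : Overpartition, ECond k 1 l → SmallestNonOverlined l → 2 ≤ l.lowest :=
    fun l hE hl => Overpartition.two_le_lowest hl (Nat.le_zero.1 hE.1)
  refine (Set.InvOn.bijOn (f := Overpartition.raise) (f' := Overpartition.lower)
    ⟨?_, ?_⟩ ?_ ?_).ncard_eq.symm
  · rintro μ ⟨-, -, -, hμ⟩
    exact Overpartition.lower_raise (Overpartition.smallestOverlined_iff.1 hμ)
  · rintro ν ⟨-, -, hE, hν⟩
    exact Overpartition.raise_lower (two_le ν hE hν) hν
  · rintro μ ⟨hwt, hparts, hE, hμ⟩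
    rw [Overpartition.smallestOverlined_iff] at hμ
    have := μ.parts_le_wt
    refine ⟨?_, by rw [Overpartition.parts_raise hμ, hparts],
      (Overpartition.eCond_raise_iff hμ hk).2 hE, μ.smallestNonOverlined_raise⟩
    rw [Overpartition.wt_raise hμ]
    omega
  · rintro ν ⟨hwt, hparts, hE, hν⟩
    have hs := two_le ν hE hν
    have hμ := Overpartition.fbar_lower_lowest hs
    rw [← Overpartition.raise_lower hs hν] at hwt hparts hE
    rw [Overpartition.wt_raise hμ] at hwt
    rw [Overpartition.parts_raise hμ] at hparts
    exact ⟨by omega, hparts, (Overpartition.eCond_raise_iff hμ hk).1 hE,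
      Overpartition.smallestOverlined_iff.2 hμ⟩
end

section
/- Let λ be an overpartition whose Göllnitz–Gordon marking is decomposed into clusters GG(λ) = {α^{(N₁)}, α^{(N₁−1)}, …, α^{(1)}}. For 1 ≤ j < N₁, let α(j) = { r : |α_r^{(j)}| − |α_r^{(j+1)}| ≤ 2, with strict inequality required if α_r^{(j)} or α_r^{(j+1)} is odd }. Then α(j) has at most one element. -/
open scoped BigOperators

/-!
Suppose `c < c'` both lie in `β(j)` and write `x_p`, `y_p` for the parts of the clusters `j`
and `j + 1` carrying the mark `p + 1`. Two parts with the same mark `≥ 2` differ in size by at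
least `2`; since the heads satisfy `|y_0| < |x_0|`, the chain conditions force
`|y_p| + 2 ≤ |x_p|` for every `p ≥ 1`. At `c'` the defining inequality of `β(j)` then gives
`|x_{c'}| = |y_{c'}| + 2 =: s` with `s` even, so `x_{c'}` is a non-overlined even part sharing
its mark with the part `y_{c'}` of size `s - 2`. The marking rule only allows this for the
smallest such mark: every part of size `s - 2` has mark `≥ c' + 1`. Hence no `x_p` with
`p < c'` has size `s - 2`, and walking down the chain the sizes `|x_p|` stay in `{s - 1, s}`.
At `c` the condition of `β(j)` then forces `|y_c| = s - 2`, although its mark is `c + 1 ≤ c'`.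
-/

/-- What conditions (i)–(iii) of a cluster say about the sizes of two consecutive entries. -/
def SizeStep (a b : ℕ) : Prop :=
  a ≤ b ∧ b ≤ a + 2 ∧ (a % 2 = 1 → b = a + 1)

section Chains

variable {x y : ℕ → ℕ} {n : ℕ}

lemma monotoneOn_Iic_of_le_succ (hx : ∀ p < n, x p ≤ x (p + 1)) : MonotoneOn x (Set.Iic n) := by
  intro a _ b hb hab
  rw [Set.mem_Iic] at hb
  induction b, hab using Nat.le_induction with
  | base => exact le_rfl
  | succ b _ ih => exact (ih (by omega)).trans (hx b (by omega))

lemma add_two_le_of_forall_far (h0 : y 0 < x 0) (hx : ∀ p < n, SizeStep (x p) (x (p + 1)))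
    (hy : ∀ p < n, SizeStep (y p) (y (p + 1)))
    (hfar : ∀ p, 1 ≤ p → p ≤ n → x p + 2 ≤ y p ∨ y p + 2 ≤ x p) :
    ∀ p, 1 ≤ p → p ≤ n → y p + 2 ≤ x p := by
  intro p hp hpn
  induction p, hp using Nat.le_induction with
  | base =>
    have hx0 : x 0 ≤ x 1 := (hx 0 (by omega)).1
    have hy0 : y 1 ≤ y 0 + 2 := (hy 0 (by omega)).2.1
    have := hfar 1 le_rfl hpn
    omega
  | succ p hp ih =>
    have := ih (by omega)
    have := (hx p (by omega)).1
    have := (hy p (by omega)).2.1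
    have := hfar (p + 1) (by omega) hpn
    omega

lemma eq_or_succ_eq_of_forall_ne {s : ℕ} (hs : s % 2 = 0) (hn : x n = s)
    (hstep : ∀ p < n, SizeStep (x p) (x (p + 1))) (havoid : ∀ p < n, x p + 2 ≠ s) :
    ∀ p ≤ n, x p = s ∨ x p + 1 = s := by
  intro p hp
  induction hp using Nat.decreasingInduction with
  | self => exact Or.inl hn
  | of_succ p hp ih =>
    obtain ⟨h1, h2, h3⟩ := hstep p hp
    have := havoid p hp
    rcases Nat.mod_two_eq_zero_or_one (x p) with hpar | hpar
    · omega
    · have := h3 hpar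
      omega

end Chains

lemma mex1_spec (S : Finset ℕ) : mex1 S ∉ S ∧ ∀ m, 1 ≤ m → m < mex1 S → m ∈ S := by
  set L := (List.range (S.sup id + 2)).filter (fun r => decide (1 ≤ r ∧ r ∉ S)) with hL
  have hmemL : ∀ m, m ∈ L ↔ m < S.sup id + 2 ∧ 1 ≤ m ∧ m ∉ S := by simp [hL]
  have hsup : S.sup id + 1 ∈ L := (hmemL _).2
    ⟨by omega, by omega, fun h => Nat.not_succ_le_self _ (Finset.le_sup (f := id) h)⟩
  obtain ⟨a, t, hat⟩ := List.exists_cons_of_ne_nil (List.ne_nil_of_mem hsup)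
  have hmex : mex1 S = a := by rw [mex1, ← hL, hat]; rfl
  have hsorted : (a :: t).Pairwise (· < ·) := hat ▸ List.pairwise_lt_range.filter _
  have ha := (hmemL a).1 (hat ▸ List.mem_cons_self)
  refine ⟨hmex ▸ ha.2.2, fun m hm1 hm => by_contra fun hmS => ?_⟩
  have hmL : m ∈ a :: t := hat ▸ (hmemL m).2 ⟨by omega, hm1, hmS⟩
  rcases List.mem_cons.1 hmL with rfl | hmt
  · omega
  · have := List.rel_of_pairwise_cons hsorted hmt
    omega

lemma mex1_not_mem (S : Finset ℕ) : mex1 S ∉ S := (mex1_spec S).1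

lemma mem_of_lt_mex1 {S : Finset ℕ} {m : ℕ} (h1 : 1 ≤ m) (h2 : m < mex1 S) : m ∈ S :=
  (mex1_spec S).2 m h1 h2

lemma mem_marksWhere {acc : List (OPart × ℕ)} {test : OPart → Bool} {m : ℕ} :
    m ∈ marksWhere acc test ↔ ∃ q ∈ acc, test q.1 = true ∧ q.2 = m := by
  simp [marksWhere]

section MarkFold

variable (markOf : List (OPart × ℕ) → OPart → ℕ)

def MarksFromPrefix (M : List (OPart × ℕ)) : Prop :=
  ∀ acc q rest, M = acc ++ q :: rest → q.2 = markOf acc q.1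

lemma MarksFromPrefix.append_marked {acc₀ : List (OPart × ℕ)}
    (h : MarksFromPrefix markOf acc₀) (p : OPart) :
    MarksFromPrefix markOf (acc₀ ++ [(p, markOf acc₀ p)]) := by
  intro acc q rest heq
  rcases List.eq_nil_or_concat rest with rfl | ⟨rest', y, rfl⟩
  · obtain ⟨rfl, hq⟩ := List.append_inj' heq rfl
    simp only [List.cons.injEq, and_true] at hq
    rw [← hq]
  · rw [List.concat_eq_append, ← List.cons_append, ← List.append_assoc] at heq
    exact h acc q rest' (List.append_inj' heq rfl).1

lemma markFold_spec :
    ∀ (L : List OPart) (acc : List (OPart × ℕ)), MarksFromPrefix markOf acc →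
      (markFold markOf L acc).map Prod.fst = acc.map Prod.fst ++ L ∧
        MarksFromPrefix markOf (markFold markOf L acc)
  | [], acc, h => by simpa [markFold] using h
  | p :: L, acc, h => by
    obtain ⟨hfst, hmarks⟩ := markFold_spec L _ (h.append_marked markOf p)
    exact ⟨by simp [markFold, hfst], hmarks⟩

end MarkFold

lemma partsList_pairwise (l : Overpartition) :
    (partsList l).Pairwise (fun a b => a.1 ≤ b.1 ∧ (a = b → a.2 = false)) := by
  have hsize : ∀ t, ∀ a ∈ (if l.fbar (t + 1) = 1 then [((t + 1 : ℕ), true)] else []) ++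
      List.replicate (l.f (t + 1)) ((t + 1 : ℕ), false), a.1 = t + 1 := by
    intro t a ha
    rcases List.mem_append.1 ha with h | h
    · split at h <;> simp_all
    · simp [List.eq_of_mem_replicate h]
  unfold partsList partsListUpTo
  rw [List.flatMap_def, List.pairwise_flatten, List.pairwise_map]
  refine ⟨?_, List.pairwise_lt_range.imp_of_mem fun _ _ hts x hx y hy => ?_⟩
  · simp only [List.mem_map]
    rintro _ ⟨t, -, rfl⟩
    refine List.pairwise_append.2 ⟨by split <;> simp, List.pairwise_replicate.2 (by simp),
      fun x hx y hy => ?_⟩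
    split at hx <;> simp_all [List.eq_of_mem_replicate hy]
  · have := hsize _ x hx
    have := hsize _ y hy
    exact ⟨by omega, fun hxy => by subst hxy; omega⟩

lemma ggMarked_map_fst (l : Overpartition) : (ggMarked l).map Prod.fst = partsList l := by
  simpa [ggMarked] using
    (markFold_spec (ggMarkOf l) (partsList l) [] (by simp [MarksFromPrefix])).1

lemma ggMarked_pairwise (l : Overpartition) :
    (ggMarked l).Pairwise (fun a b => a.1.1 ≤ b.1.1 ∧ (a.1 = b.1 → a.1.2 = false)) := by
  simpa [← ggMarked_map_fst l, List.pairwise_map] using partsList_pairwise l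

lemma oneMarkedDesc_pairwise (l : Overpartition) :
    (oneMarkedDesc l).Pairwise (fun a b => b.1 ≤ a.1) := by
  rw [oneMarkedDesc, List.pairwise_reverse, List.pairwise_map]
  exact ((ggMarked_pairwise l).filter _).imp And.left

/-- For `u = 2j + 2` these are the parts `2j`, `\overline{2j}` and `\overline{2j+1}` of
the marking rule. -/
def IsEvenLowerNeighbor (u : ℕ) (p : OPart) : Prop :=
  p.1 + 2 = u ∨ (p.1 + 1 = u ∧ p.2 = true)

section GGMarked

variable {l : Overpartition} {acc : List (OPart × ℕ)} {u m : ℕ}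

lemma mark_eq_ggMarkOf {rest : List (OPart × ℕ)} {q : OPart × ℕ}
    (h : ggMarked l = acc ++ q :: rest) : q.2 = ggMarkOf l acc q.1 :=
  (markFold_spec (ggMarkOf l) (partsList l) [] (by simp [MarksFromPrefix])).2 acc q rest h

lemma mem_prefix_of_size_lt {rest : List (OPart × ℕ)} {q q' : OPart × ℕ}
    (h : ggMarked l = acc ++ q :: rest) (hq' : q' ∈ ggMarked l) (hlt : q'.1.1 < q.1.1) :
    q' ∈ acc := by
  have hsorted := ggMarked_pairwise l
  rw [h] at hq' hsorted
  rcases List.mem_append.1 hq' with hacc | hrest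
  · exact hacc
  · rcases List.mem_cons.1 hrest with rfl | hrest
    · omega
    · have := (List.rel_of_pairwise_cons (List.pairwise_append.1 hsorted).2.1 hrest).1
      omega

lemma not_pair_sublist_of_overlined {q : OPart × ℕ} (hq : q.1.2 = true) :
    ¬ List.Sublist [q, q] (ggMarked l) := fun hsub => by
  have := (ggMarked_pairwise l).sublist hsub
  simp_all

lemma ggMarkOf_odd_true (hu : u % 2 = 1) :
    ggMarkOf l acc (u, true) = mex1 (marksWhere acc (fun q => decide (q.1 = u - 1))) := by
  simp [ggMarkOf, hu]

/-- In case (c) of the marking rule the mark of `u` may coincide with a mark of a lower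
neighbour, but only with the smallest one. -/
lemma ggMarkOf_even_false (hu : u % 2 = 0) :
    ggMarkOf l acc (u, false) ∉ marksWhere acc (fun q => decide (q.1 = u)) ∧
      (ggMarkOf l acc (u, false) ∈
          marksWhere acc (fun q => decide (q.1 = u - 2 ∨ (q.1 = u - 1 ∧ q.2 = true))) →
        ∀ m' ∈ marksWhere acc (fun q => decide (q.1 = u - 2 ∨ (q.1 = u - 1 ∧ q.2 = true))),
          ggMarkOf l acc (u, false) ≤ m') := by
  set same := marksWhere acc (fun q => decide (q.1 = u))
  set lower := marksWhere acc (fun q => decide (q.1 = u - 2 ∨ (q.1 = u - 1 ∧ q.2 = true)))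
  have hdef : ggMarkOf l acc (u, false) =
      if 1 ∈ lower ∨ (l.f (u - 1) = 0 ∧ l.fbar u = 0) then mex1 (same ∪ lower)
      else mex1 (insert 1 same ∪
        (if h : lower.Nonempty then lower.erase (lower.min' h) else lower)) := by
    simp [ggMarkOf, hu, same, lower]
  rw [hdef]
  split_ifs with hb hne
  · have := mex1_not_mem (same ∪ lower)
    simp_all
  · have := mex1_not_mem (insert 1 same ∪ lower.erase (lower.min' hne))
    simp only [Finset.mem_union, Finset.mem_insert, Finset.mem_erase, not_or] at this
    refine ⟨this.1.2, fun hm m' hm' => ?_⟩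
    have hmin : mex1 (insert 1 same ∪ lower.erase (lower.min' hne)) = lower.min' hne := by
      by_contra hne'
      exact this.2 ⟨hne', hm⟩
    rw [hmin]
    exact lower.min'_le m' hm'
  · have := mex1_not_mem (insert 1 same ∪ lower)
    simp only [Finset.mem_union, Finset.mem_insert, not_or] at this
    exact ⟨this.1.2, fun hm => absurd ⟨_, hm⟩ hne⟩

lemma overlined_iff_odd_of_two_le_mark {q : OPart × ℕ} (hq : q ∈ ggMarked l) (hm : 2 ≤ q.2) :
    q.1.2 = true ↔ q.1.1 % 2 = 1 := by
  obtain ⟨acc, rest, h⟩ := List.append_of_mem hq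
  have := mark_eq_ggMarkOf h
  obtain ⟨⟨u, b⟩, m⟩ := q
  rcases Nat.mod_two_eq_zero_or_one u with hu | hu <;> cases b <;> simp_all [ggMarkOf]

lemma mark_ne_of_odd_overlined (hu : u % 2 = 1) (hq : ((u, true), m) ∈ ggMarked l)
    {q : OPart × ℕ} (hq' : q ∈ ggMarked l) (hsize : q.1.1 + 1 = u) : q.2 ≠ m := by
  obtain ⟨acc, rest, h⟩ := List.append_of_mem hq
  have hmark : m = _ := (mark_eq_ggMarkOf h).trans (ggMarkOf_odd_true hu)
  intro hqm
  refine mex1_not_mem _ (hmark ▸ mem_marksWhere.2 ⟨q, ?_, ?_, hqm⟩)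
  · exact mem_prefix_of_size_lt h hq' (by dsimp only; omega)
  · simp only [decide_eq_true_eq]
    omega

lemma exists_mark_one_of_odd_overlined (hu : u % 2 = 1) (hq : ((u, true), m) ∈ ggMarked l)
    (hm : 2 ≤ m) : ∃ q ∈ ggMarked l, q.1.1 + 1 = u ∧ q.2 = 1 := by
  obtain ⟨acc, rest, h⟩ := List.append_of_mem hq
  have hmark : m = _ := (mark_eq_ggMarkOf h).trans (ggMarkOf_odd_true hu)
  obtain ⟨q, hq, htest, hq2⟩ := mem_marksWhere.1 (mem_of_lt_mex1 le_rfl (hmark ▸ hm))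
  simp only [decide_eq_true_eq] at htest
  refine ⟨q, ?_, by omega, hq2⟩
  rw [h]
  exact List.mem_append_left _ hq

lemma mark_le_of_isEvenLowerNeighbor (hu : u % 2 = 0) (hq : ((u, false), m) ∈ ggMarked l)
    (hwit : ∃ q' ∈ ggMarked l, IsEvenLowerNeighbor u q'.1 ∧ q'.2 = m)
    {q : OPart × ℕ} (hq' : q ∈ ggMarked l) (hlow : IsEvenLowerNeighbor u q.1) : m ≤ q.2 := by
  obtain ⟨acc, rest, h⟩ := List.append_of_mem hq
  have hmark := mark_eq_ggMarkOf h
  have hlower : ∀ q ∈ ggMarked l, IsEvenLowerNeighbor u q.1 →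
      q.2 ∈ marksWhere acc (fun q => decide (q.1 = u - 2 ∨ (q.1 = u - 1 ∧ q.2 = true))) := by
    intro q hq hlow
    unfold IsEvenLowerNeighbor at hlow
    refine mem_marksWhere.2 ⟨q, mem_prefix_of_size_lt h hq (by dsimp only; omega), ?_, rfl⟩
    simp only [decide_eq_true_eq]
    rcases hlow with hs | ⟨hs, hb⟩
    · exact Or.inl (by omega)
    · exact Or.inr ⟨by omega, hb⟩
  obtain ⟨q', hq'mem, hq'low, rfl⟩ := hwit
  exact hmark ▸ (ggMarkOf_even_false hu).2 (hmark ▸ hlower q' hq'mem hq'low) _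
    (hlower q hq' hlow)

lemma not_pair_sublist_of_two_le_mark {q : OPart × ℕ} (hm : 2 ≤ q.2) :
    ¬ List.Sublist [q, q] (ggMarked l) := by
  intro hsub
  have hq : q ∈ ggMarked l := hsub.subset List.mem_cons_self
  cases hb : q.1.2
  · have hu : q.1.1 % 2 = 0 := by
      have := overlined_iff_odd_of_two_le_mark hq hm
      simp_all
    obtain ⟨r₁, r₂, hr, hq₁, hq₂⟩ := List.cons_sublist_iff.1 hsub
    obtain ⟨s, t, rfl⟩ := List.append_of_mem (List.singleton_sublist.1 hq₂)
    rw [← List.append_assoc] at hr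
    have hmark := mark_eq_ggMarkOf hr
    have hq1 : q.1 = (q.1.1, false) := Prod.ext rfl hb
    refine (ggMarkOf_even_false (l := l) (acc := r₁ ++ s) hu).1 ?_
    rw [← hq1, ← hmark]
    exact mem_marksWhere.2 ⟨q, List.mem_append_left _ hq₁, by simp, rfl⟩
  · exact not_pair_sublist_of_overlined hb hsub

lemma size_ne_succ_of_mark_eq {x y : OPart} {b : ℕ} (hb : 2 ≤ b)
    (hx : (x, b) ∈ ggMarked l) (hy : (y, b) ∈ ggMarked l) : y.1 ≠ x.1 + 1 := by
  intro hxy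
  have hxpar := overlined_iff_odd_of_two_le_mark hx hb
  have hypar := overlined_iff_odd_of_two_le_mark hy hb
  obtain ⟨u, bx⟩ := x
  obtain ⟨v, by'⟩ := y
  dsimp only at hxy hxpar hypar
  subst hxy
  rcases Nat.mod_two_eq_zero_or_one u with hu | hu
  · obtain rfl : by' = true := hypar.2 (by omega)
    exact mark_ne_of_odd_overlined (by omega) hy hx rfl rfl
  · -- `x` is `\overline{u}` with mark `≥ 2`, so some part `u - 1` has mark `1`; but sharing
    -- its mark with the lower neighbour `x` makes `b` the least mark of such parts.
    obtain rfl : bx = true := hxpar.2 hu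
    obtain rfl : by' = false := Bool.eq_false_iff.2 fun hb => by
      have := hypar.1 hb
      omega
    obtain ⟨q, hq, hqsize, hqmark⟩ := exists_mark_one_of_odd_overlined hu hx hb
    have := mark_le_of_isEvenLowerNeighbor (by omega) hy ⟨_, hx, Or.inr ⟨rfl, rfl⟩, rfl⟩ hq
      (Or.inl (by omega))
    omega

/-- The multiset hypothesis says that `(x, b)` and `(y, b)` are two different entries of the
marking (their values may coincide). -/
lemma size_add_two_le_of_mark_eq {x y : OPart} {b : ℕ} (hb : 2 ≤ b)
    (h : ({(x, b), (y, b)} : Multiset (OPart × ℕ)) ≤ ggMarked l) :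
    x.1 + 2 ≤ y.1 ∨ y.1 + 2 ≤ x.1 := by
  have hx : (x, b) ∈ ggMarked l := Multiset.mem_of_le h (by simp)
  have hy : (y, b) ∈ ggMarked l := Multiset.mem_of_le h (by simp)
  by_contra! hclose
  rcases lt_trichotomy x.1 y.1 with hlt | heq | hgt
  · exact size_ne_succ_of_mark_eq hb hx hy (by omega)
  · have hxy : x = y := Prod.ext heq (Bool.eq_iff_iff.2 <| by
      rw [overlined_iff_odd_of_two_le_mark hx hb, overlined_iff_odd_of_two_le_mark hy hb, heq])
    subst hxy
    obtain ⟨l', hperm, hsub⟩ := Multiset.coe_le.1 h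
    obtain rfl : l' = List.replicate 2 (x, b) := List.perm_replicate.1 hperm
    exact not_pair_sublist_of_two_le_mark hb hsub
  · exact size_ne_succ_of_mark_eq hb hy hx (by omega)

end GGMarked

lemma chainStep.sizeStep {L : List (OPart × ℕ)} {b : ℕ} {x y : OPart}
    (h : chainStep L b x y) : SizeStep x.1 y.1 := by
  obtain ⟨hodd, heven⟩ := h
  rcases Nat.mod_two_eq_zero_or_one x.1 with hx | hx
  · obtain ⟨hfar, hnear⟩ := heven hx
    by_cases hE : ExistsMarkedAt L (x.1 + 2) (b + 1)
    · have := hnear hE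
      exact ⟨this.1, by omega, by omega⟩
    · exact ⟨(hfar hE).1, (hfar hE).2, by omega⟩
  · have := hodd hx
    exact ⟨by omega, by omega, fun _ => this⟩

lemma mem_clusterMS {cl : List OPart} {x : OPart} {p : ℕ} (hx : cl[p]? = some x) :
    (x, p + 1) ∈ clusterMS cl := by
  unfold clusterMS
  rw [Multiset.mem_coe, List.mem_map]
  exact ⟨(x, p), List.mk_mem_zipIdx_iff_getElem?.2 hx, rfl⟩

lemma size_le_of_mem_betaIdx {α : ℕ → List OPart} {j c : ℕ} {x y : OPart}
    (hc : c ∈ BetaIdx α j) (hx : (α j)[c]? = some x) (hy : (α (j + 1))[c]? = some y) :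
    x.1 ≤ y.1 + 2 ∧ (x.1 % 2 = 1 ∨ y.1 % 2 = 1 → x.1 ≤ y.1 + 1) := by
  obtain ⟨x', y', hx', hy', hle, hstr⟩ := hc
  obtain rfl := Option.some.inj (hx'.symm.trans hx)
  obtain rfl := Option.some.inj (hy'.symm.trans hy)
  exact ⟨by omega, fun hodd => by have := hstr hodd; omega⟩

lemma List.getElem?_eq_some_getD {β : Type*} {L : List β} {p : ℕ} (d : β) (hp : p < L.length) :
    L[p]? = some (L.getD p d) := by
  simp [List.getD_eq_getElem?_getD, List.getElem?_eq_getElem hp]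

namespace IsClusterDecomp

variable {l : Overpartition} {α : ℕ → List OPart} {j : ℕ}

lemma mem_ggMarked (h : IsClusterDecomp l α) {p : ℕ} (hj1 : 1 ≤ j) (hj : j ≤ ggN l 1)
    {x : OPart} (hx : (α j)[p]? = some x) : (x, p + 1) ∈ ggMarked l := by
  rw [← Multiset.mem_coe, h.2.2.1]
  exact Multiset.mem_sum.2 ⟨j, Finset.mem_Icc.2 ⟨hj1, hj⟩, mem_clusterMS hx⟩

lemma pair_le_ggMarked (h : IsClusterDecomp l α) {j' p p' : ℕ} (hjj' : j ≠ j')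
    (hj1 : 1 ≤ j) (hj : j ≤ ggN l 1) (hj'1 : 1 ≤ j') (hj' : j' ≤ ggN l 1) {x y : OPart}
    (hx : (α j)[p]? = some x) (hy : (α j')[p']? = some y) :
    ({(x, p + 1), (y, p' + 1)} : Multiset (OPart × ℕ)) ≤ ggMarked l := by
  rw [h.2.2.1]
  calc ({(x, p + 1), (y, p' + 1)} : Multiset (OPart × ℕ))
      = {(x, p + 1)} + {(y, p' + 1)} := rfl
    _ ≤ clusterMS (α j) + clusterMS (α j') :=
      add_le_add (Multiset.singleton_le.2 (mem_clusterMS hx))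
        (Multiset.singleton_le.2 (mem_clusterMS hy))
    _ = ∑ i ∈ {j, j'}, clusterMS (α i) :=
      (Finset.sum_pair (f := fun i => clusterMS (α i)) hjj').symm
    _ ≤ ∑ i ∈ Finset.Icc 1 (ggN l 1), clusterMS (α i) := by
      refine Finset.sum_le_sum_of_subset fun i hi => ?_
      simp only [Finset.mem_insert, Finset.mem_singleton] at hi
      rcases hi with rfl | rfl <;> exact Finset.mem_Icc.2 ⟨by assumption, by assumption⟩

lemma sizeStep (h : IsClusterDecomp l α) {n : ℕ} {X : ℕ → OPart}
    (hX : ∀ p ≤ n, (α j)[p]? = some (X p)) : ∀ p < n, SizeStep (X p).1 (X (p + 1)).1 :=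
  fun p hp => (h.2.2.2.2.1 j p _ _ (hX p hp.le) (hX (p + 1) hp)).sizeStep

/-- Equal heads of consecutive clusters would make the lower cluster a forced singleton. -/
lemma head_size_lt (h : IsClusterDecomp l α) (hj1 : 1 ≤ j) (hj : j < ggN l 1) {x y : OPart}
    (hx : (α j)[0]? = some x) (hy : (α (j + 1))[0]? = some y)
    (hlen : 2 ≤ (α (j + 1)).length) : y.1 < x.1 := by
  have hx1 : (oneMarkedDesc l)[j - 1]? = some x := by
    rw [← h.2.1 j hj1 hj.le, List.head?_eq_getElem?]
    exact hx
  have hy1 : (oneMarkedDesc l)[j]? = some y := by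
    have := h.2.1 (j + 1) (by omega) hj
    rw [Nat.add_sub_cancel, List.head?_eq_getElem?, hy] at this
    exact this.symm
  have hle : y.1 ≤ x.1 := by
    obtain ⟨hi, rfl⟩ := List.getElem?_eq_some_iff.1 hx1
    obtain ⟨hi', rfl⟩ := List.getElem?_eq_some_iff.1 hy1
    exact List.pairwise_iff_getElem.1 (oneMarkedDesc_pairwise l) _ _ _ _ (by omega)
  refine lt_of_le_of_ne hle fun heq => ?_
  have hforced : ForcedSingleton (oneMarkedDesc l) (j + 1) :=
    ⟨by omega, y, x, by simpa using hy1, by simpa [show j + 1 - 2 = j - 1 by omega] using hx1,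
      Or.inl heq⟩
  have := h.2.2.2.1 (j + 1) hforced
  omega

variable {n : ℕ} {X Y : ℕ → OPart}

lemma size_succ_add_two_le (h : IsClusterDecomp l α) (hj1 : 1 ≤ j) (hj : j < ggN l 1)
    (hX : ∀ p ≤ n, (α j)[p]? = some (X p)) (hY : ∀ p ≤ n, (α (j + 1))[p]? = some (Y p)) :
    ∀ p, 1 ≤ p → p ≤ n → (Y p).1 + 2 ≤ (X p).1 := by
  intro p hp hpn
  have hlen : 2 ≤ (α (j + 1)).length := by
    have := (List.getElem?_eq_some_iff.1 (hY 1 (by omega))).1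
    omega
  refine add_two_le_of_forall_far (x := fun p => (X p).1) (y := fun p => (Y p).1)
    (h.head_size_lt hj1 hj (hX 0 (Nat.zero_le _)) (hY 0 (Nat.zero_le _)) hlen)
    (h.sizeStep hX) (h.sizeStep hY)
    (fun p hp1 hp => size_add_two_le_of_mark_eq (l := l) (b := p + 1) (by omega) ?_) p hp hpn
  exact h.pair_le_ggMarked (by omega) hj1 hj.le (by omega) hj (hX p hp) (hY p hp)

lemma forall_mark_le_of_mem_betaIdx (h : IsClusterDecomp l α) (hj1 : 1 ≤ j) (hj : j < ggN l 1)
    (hX : ∀ p ≤ n, (α j)[p]? = some (X p)) (hY : ∀ p ≤ n, (α (j + 1))[p]? = some (Y p))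
    (hn : 1 ≤ n) (hβ : n ∈ BetaIdx α j) :
    (X n).1 % 2 = 0 ∧ (Y n).1 + 2 = (X n).1 ∧
      ∀ q ∈ ggMarked l, q.1.1 + 2 = (X n).1 → n + 1 ≤ q.2 := by
  obtain ⟨hle, hstr⟩ := size_le_of_mem_betaIdx hβ (hX n le_rfl) (hY n le_rfl)
  have hgap := h.size_succ_add_two_le hj1 hj hX hY n hn le_rfl
  have heven : (X n).1 % 2 = 0 := by
    by_contra hodd
    have := hstr (Or.inl (by omega))
    omega
  have hXmem := h.mem_ggMarked hj1 hj.le (hX n le_rfl)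
  have hXn : X n = ((X n).1, false) :=
    Prod.ext rfl (by simpa [heven] using overlined_iff_odd_of_two_le_mark hXmem (by omega))
  refine ⟨heven, by omega, fun q hq hqs => ?_⟩
  exact mark_le_of_isEvenLowerNeighbor heven (hXn ▸ hXmem)
    ⟨_, h.mem_ggMarked (by omega) hj (hY n le_rfl), Or.inl (by dsimp only; omega), rfl⟩ hq
    (Or.inl hqs)

lemma not_mem_betaIdx_of_lt (h : IsClusterDecomp l α) (hj1 : 1 ≤ j) (hj : j < ggN l 1)
    {c c' : ℕ} (hcc' : c < c') (hc : c ∈ BetaIdx α j) : c' ∉ BetaIdx α j := by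
  intro hc'
  have ⟨_, _, hx', hy', _⟩ := hc'
  set X : ℕ → OPart := fun p => (α j).getD p (0, false)
  set Y : ℕ → OPart := fun p => (α (j + 1)).getD p (0, false)
  have hX : ∀ p ≤ c', (α j)[p]? = some (X p) := fun p hp =>
    List.getElem?_eq_some_getD _ (hp.trans_lt (List.getElem?_eq_some_iff.1 hx').1)
  have hY : ∀ p ≤ c', (α (j + 1))[p]? = some (Y p) := fun p hp =>
    List.getElem?_eq_some_getD _ (hp.trans_lt (List.getElem?_eq_some_iff.1 hy').1)
  obtain ⟨heven, hs, hmin⟩ := h.forall_mark_le_of_mem_betaIdx hj1 hj hX hY (by omega) hc'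
  have hXc : (X c).1 = (X c').1 ∨ (X c).1 + 1 = (X c').1 :=
    eq_or_succ_eq_of_forall_ne (x := fun p => (X p).1) heven rfl (h.sizeStep hX)
      (fun p hp heq => by
        have := hmin _ (h.mem_ggMarked hj1 hj.le (hX p hp.le)) heq
        omega) c hcc'.le
  have hYc : (Y c).1 ≤ (Y c').1 :=
    monotoneOn_Iic_of_le_succ (x := fun p => (Y p).1) (fun p hp => (h.sizeStep hY p hp).1)
      (Set.mem_Iic.2 hcc'.le) (Set.mem_Iic.2 le_rfl) hcc'.le
  obtain ⟨hle, hstr⟩ := size_le_of_mem_betaIdx hc (hX c hcc'.le) (hY c hcc'.le)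
  have hYcs : (Y c).1 + 2 = (X c').1 := by
    rcases hXc with hXc | hXc
    · omega
    · have := hstr (Or.inl (by omega))
      omega
  have := hmin _ (h.mem_ggMarked (by omega) hj (hY c hcc'.le)) hYcs
  omega

end IsClusterDecomp

/-- Proposition 5.4: for `1 ≤ j < N₁`, the set
`α(j) = {r : |α_r^{(j)}| - |α_r^{(j+1)}| ≤ 2, strict if either part is odd}`
has at most one element. -/
theorem betaIdx_subsingleton
    (l : Overpartition) (α : ℕ → List OPart) (h : IsClusterDecomp l α)
    (j : ℕ) (hj1 : 1 ≤ j) (hj : j < ggN l 1) :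
    (BetaIdx α j).Subsingleton := by
  intro c hc c' hc'
  by_contra hne
  rcases Nat.lt_or_gt_of_ne hne with hlt | hlt
  · exact h.not_mem_betaIdx_of_lt hj1 hj hlt hc hc'
  · exact h.not_mem_betaIdx_of_lt hj1 hj hlt hc' hc
end
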